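/- arXiv:1008.4433 — 4 statements merged into one kernel-verified Lean document; each statement's English description precedes it below -/
import Mathlib

section
/- For every multiplicatively symmetric polynomial p(x) of degree n over a field K, there exists a unique additively symmetric polynomial q(x) of degree n over K such that p(x) = x^{n/2}(q(√x) + q(1/√x) - q(0)); equivalently, p(x^2) = x^n (q(x) + q(1/x) - q(0)) as Laurent polynomials. -/
/-!
Put `P = p(x²)`, of degree `2n`. The Laurent polynomial `xⁿ (q(x) + q(1/x) - q(0))` has
coefficient `q_{|j-n|}` at `xʲ`, so `q` is forced to be `P` with its lowest `n` coefficients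
dropped: `q_k = P_{n+k}`. That this `q` works for `j < n` is the symmetry `P_j = P_{2n-j}`,
inherited from that of `p`. Since `P` only has even powers, `q_k = 0` unless `n + k` is even,
which is the additive symmetry of `q`.
-/

open Polynomial LaurentPolynomial

namespace LaurentPolynomial

section Semiring

variable {R : Type*} [Semiring R]

lemma coeff_T_mul (m : ℤ) (f : R[T;T⁻¹]) (j : ℤ) : (T m * f).coeff j = f.coeff (j - m) := by
  rw [T, AddMonoidAlgebra.coeff_single_mul_apply, one_mul, sub_eq_neg_add]

end Semiring

variable {R : Type*} [CommSemiring R]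

lemma T_mul_invert_eq_self_iff {m : ℤ} {f : R[T;T⁻¹]} :
    T m * invert f = f ↔ ∀ j, f.coeff (m - j) = f.coeff j := by
  refine ⟨fun h j => ?_, fun h => LaurentPolynomial.ext fun j => ?_⟩
  · rw [← h, coeff_T_mul, invert_apply, neg_sub, sub_sub_cancel, h]
  · rw [coeff_T_mul, invert_apply, neg_sub, h]

end LaurentPolynomial

namespace Polynomial

section Semiring

variable {R : Type*} [Semiring R]

@[simp]
lemma coeff_toLaurent_natCast (p : R[X]) (k : ℕ) : (toLaurent p).coeff k = p.coeff k := by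
  rw [coeff_toLaurent, show (k : ℤ) = Nat.castEmbedding k from rfl,
    Finsupp.mapDomain_apply Nat.castEmbedding.injective]
  rfl

lemma coeff_toLaurent_of_neg (p : R[X]) {j : ℤ} (hj : j < 0) : (toLaurent p).coeff j = 0 := by
  rw [coeff_toLaurent, Finsupp.mapDomain_of_notMem_range]
  rintro ⟨k, rfl⟩
  exact absurd hj (by simp)

lemma coeff_iterate_divX (p : R[X]) (n k : ℕ) : (divX^[n] p).coeff k = p.coeff (k + n) := by
  induction n generalizing p with
  | zero => rfl
  | succ n ih => rw [Function.iterate_succ_apply, ih, coeff_divX, add_assoc]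

lemma natDegree_iterate_divX (p : R[X]) (n : ℕ) : (divX^[n] p).natDegree = p.natDegree - n := by
  induction n generalizing p with
  | zero => rfl
  | succ n ih => rw [Function.iterate_succ_apply, ih, natDegree_divX_eq_natDegree_tsub_one,
      Nat.sub_sub, add_comm]

end Semiring

section CommSemiring

variable {R : Type*} [CommSemiring R]

lemma coeff_toLaurent_expand {k : ℕ} (hk : 0 < k) (p : R[X]) (j : ℤ) :
    (toLaurent (expand R k p)).coeff j = if (k : ℤ) ∣ j then (toLaurent p).coeff (j / k) else 0 := by
  rcases lt_or_ge j 0 with hj | hj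
  · have : j / k < 0 := Int.ediv_neg_of_neg_of_pos hj (by exact_mod_cast hk)
    rw [coeff_toLaurent_of_neg _ hj, coeff_toLaurent_of_neg _ this, ite_self]
  · lift j to ℕ using hj
    simp only [coeff_toLaurent_natCast, coeff_expand hk, Int.natCast_dvd_natCast,
      ← Int.natCast_div]

lemma T_mul_invert_toLaurent_expand {k : ℕ} (hk : 0 < k) {m : ℤ} {p : R[X]}
    (hp : T m * invert (toLaurent p) = toLaurent p) :
    T (k * m) * invert (toLaurent (expand R k p)) = toLaurent (expand R k p) := by
  rw [T_mul_invert_eq_self_iff] at hp ⊢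
  intro j
  have hk' : (k : ℤ) ≠ 0 := by exact_mod_cast hk.ne'
  rw [coeff_toLaurent_expand hk, coeff_toLaurent_expand hk]
  by_cases hj : (k : ℤ) ∣ j
  · obtain ⟨i, rfl⟩ := hj
    rw [← mul_sub, if_pos (dvd_mul_right _ _), if_pos (dvd_mul_right _ _),
      Int.mul_ediv_cancel_left _ hk', Int.mul_ediv_cancel_left _ hk', hp]
  · rw [if_neg hj, if_neg fun h => hj (by simpa using (dvd_mul_right (k : ℤ) m).sub h)]

end CommSemiring

section Ring

variable {R : Type*} [Ring R]

lemma coeff_comp_neg_X (q : R[X]) (k : ℕ) : (q.comp (-X)).coeff k = (-1) ^ k * q.coeff k := by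
  rw [← neg_one_mul, ← map_one Polynomial.C, ← map_neg Polynomial.C, comp_C_mul_X_coeff,
    (Commute.neg_one_left _).pow_left _ |>.eq]

lemma eq_neg_one_pow_smul_comp_neg_X {q : R[X]} {n : ℕ}
    (hq : ∀ k, ¬ 2 ∣ n + k → q.coeff k = 0) : q = (-1 : R) ^ n • q.comp (-X) := by
  ext k
  rw [coeff_smul, smul_eq_mul, coeff_comp_neg_X, ← mul_assoc, ← pow_add]
  by_cases h : 2 ∣ n + k
  · rw [(even_iff_two_dvd.2 h).neg_one_pow, one_mul]
  · rw [hq k h, mul_zero]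

end Ring

section CommRing

variable {R : Type*} [CommRing R]

lemma coeff_T_mul_toLaurent_add_invert_sub_C (q : R[X]) (n j : ℤ) :
    (T n * (toLaurent q + invert (toLaurent q) - LaurentPolynomial.C (q.coeff 0))).coeff j =
      q.coeff (j - n).natAbs := by
  rw [coeff_T_mul]
  generalize j - n = i
  simp only [AddMonoidAlgebra.coeff_sub, AddMonoidAlgebra.coeff_add, Finsupp.sub_apply,
    Finsupp.add_apply, invert_apply, LaurentPolynomial.C_apply]
  rcases eq_or_ne i 0 with rfl | hi
  · rw [neg_zero, if_pos rfl, ← Nat.cast_zero, coeff_toLaurent_natCast, add_sub_cancel_right,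
      Int.natAbs_natCast]
  rw [if_neg hi, sub_zero]
  obtain ⟨k, rfl | rfl⟩ := Int.eq_nat_or_neg i
  · rw [coeff_toLaurent_natCast, coeff_toLaurent_of_neg _ (by omega), add_zero,
      Int.natAbs_natCast]
  · rw [neg_neg, coeff_toLaurent_natCast, coeff_toLaurent_of_neg _ (by omega), zero_add,
      Int.natAbs_neg, Int.natAbs_natCast]

lemma eq_T_mul_toLaurent_add_invert_sub_C_iff {f : R[T;T⁻¹]} {q : R[X]} {n : ℤ} :
    f = T n * (toLaurent q + invert (toLaurent q) - LaurentPolynomial.C (q.coeff 0)) ↔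
      ∀ j, f.coeff j = q.coeff (j - n).natAbs := by
  refine ⟨fun h j => ?_, fun h => LaurentPolynomial.ext fun j => ?_⟩
  · rw [h, coeff_T_mul_toLaurent_add_invert_sub_C]
  · rw [h, coeff_T_mul_toLaurent_add_invert_sub_C]

end CommRing

end Polynomial

/-- For every multiplicatively symmetric polynomial `p` of degree `n` over a field `K`
(`x^n p(1/x) = p(x)` as Laurent polynomials) there is a unique additively symmetric
polynomial `q` of degree `n` (`q(x) = (-1)^n q(-x)`) such that, as Laurent polynomials,
`p(x²) = x^n (q(x) + q(1/x) - q(0))`. -/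
theorem stmt2 {K : Type*} [Field K] (p : Polynomial K) (n : ℕ) (hdeg : p.natDegree = n)
    (hsym : LaurentPolynomial.T (n : ℤ) * LaurentPolynomial.invert (Polynomial.toLaurent p)
      = Polynomial.toLaurent p) :
    ∃! q : Polynomial K, q.natDegree = n ∧ q = ((-1 : K) ^ n) • q.comp (-Polynomial.X) ∧
      Polynomial.toLaurent (p.comp (Polynomial.X ^ 2)) =
        LaurentPolynomial.T (n : ℤ) *
          (Polynomial.toLaurent q + LaurentPolynomial.invert (Polynomial.toLaurent q)
            - LaurentPolynomial.C (q.coeff 0)) := by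
  rw [← expand_eq_comp_X_pow]
  set P := expand K 2 p
  have hPsym := T_mul_invert_eq_self_iff.1 (T_mul_invert_toLaurent_expand two_pos hsym)
  have hPcoeff (j : ℤ) : (toLaurent P).coeff j = P.coeff ((j - n).natAbs + n) := by
    rw [← coeff_toLaurent_natCast]
    rcases le_or_gt (n : ℤ) j with h | h
    · congr 1; omega
    · rw [← hPsym j]; congr 1; omega
  refine ⟨divX^[n] P, ⟨?_, ?_, ?_⟩, ?_⟩
  · rw [natDegree_iterate_divX, natDegree_expand, hdeg]; omega
  · refine eq_neg_one_pow_smul_comp_neg_X fun k hk => ?_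
    rw [coeff_iterate_divX, coeff_expand two_pos, if_neg (by omega)]
  · exact eq_T_mul_toLaurent_add_invert_sub_C_iff.2 fun j => by rw [hPcoeff, coeff_iterate_divX]
  · rintro q ⟨-, -, hq⟩
    ext k
    have hk := eq_T_mul_toLaurent_add_invert_sub_C_iff.1 hq (k + n : ℕ)
    rw [coeff_toLaurent_natCast, Nat.cast_add, add_sub_cancel_right, Int.natAbs_natCast] at hk
    rw [coeff_iterate_divX, hk]
end

section
/- Define 𝒬_0(x) = 1 and 𝒬_n(x) = Σ_{j=0}^{⌊(n-1)/2⌋} (-1)^j (C(n-1,j) - C(n-1,j-1)) x^{n-2j} for n ≥ 1. Then for every n ≥ 1, x^n = Σ_{k=0}^{⌊(n-1)/2⌋} C(n-1-k, k) · 𝒬_{n-2k}(x). -/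
open Polynomial Finset

/-! Comparing coefficients of `X ^ (N + 1 - 2m)` (with `n = N + 1`), the claim is
`∑_{k ≤ m} (-1)^(m-k) C(N-k, k) (C(N-2k, m-k) - C(N-2k, m-k-1)) = δ_{m,0}` for `2m ≤ N`.
Trinomial revision `C(a, k) C(a-k, m-k) = C(a, m) C(m, k)` splits this into two alternating sums
`∑_k (-1)^k C(m, k) C(N-k, r)`, i.e. `m`-th finite differences, equal to `C(N-m, r-m)`.
For `r = m` and `r = m - 1` both halves are `(-1)^m`, so they cancel as soon as `m ≥ 1`. -/

/-- The binomial coefficient `C(a,b)` for integer arguments, with the convention that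
`C(a,b) = 0` unless `0 ≤ b ≤ a`. -/
def Cb (a b : ℤ) : ℚ :=
  if 0 ≤ b ∧ b ≤ a then (a.toNat.choose b.toNat : ℚ) else 0

/-- `𝒬_0(x) = 1` and
`𝒬_n(x) = Σ_{j=0}^{⌊(n-1)/2⌋} (-1)^j (C(n-1,j) - C(n-1,j-1)) x^{n-2j}` for `n ≥ 1`. -/
noncomputable def QQ : ℕ → Polynomial ℚ
  | 0 => 1
  | (n + 1) =>
      ∑ j ∈ Finset.range (n / 2 + 1),
        Polynomial.C ((-1 : ℚ) ^ j * (Cb n j - Cb n ((j : ℤ) - 1))) *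
          Polynomial.X ^ (n + 1 - 2 * j)

lemma Cb_natCast (a b : ℕ) : Cb a b = a.choose b := by
  unfold Cb
  split_ifs with h
  · simp
  · rw [Nat.choose_eq_zero_of_lt (by omega), Nat.cast_zero]

lemma Cb_of_neg {a b : ℤ} (hb : b < 0) : Cb a b = 0 := if_neg (by omega)

lemma Cb_of_lt {a b : ℤ} (h : a < b) : Cb a b = 0 := if_neg (by omega)

lemma Cb_zero_right {a : ℤ} (ha : 0 ≤ a) : Cb a 0 = 1 := by simp [Cb, ha]

lemma Cb_pascal {a : ℤ} (b : ℤ) (ha : 1 ≤ a) : Cb a b = Cb (a - 1) b + Cb (a - 1) (b - 1) := by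
  obtain ⟨A, rfl⟩ : ∃ A : ℕ, a = A + 1 := ⟨(a - 1).toNat, by omega⟩
  rcases lt_trichotomy b 0 with hb | rfl | hb
  · simp [Cb_of_neg hb, Cb_of_neg (show b - 1 < 0 by omega)]
  · rw [Cb_zero_right (by omega), add_sub_cancel_right, Cb_zero_right (by omega),
      Cb_of_neg (by omega), add_zero]
  obtain ⟨B, rfl⟩ : ∃ B : ℕ, b = B + 1 := ⟨(b - 1).toNat, by omega⟩
  simp only [add_sub_cancel_right]
  rw [← Nat.cast_succ, ← Nat.cast_succ, Cb_natCast, Cb_natCast, Cb_natCast, Nat.choose_succ_succ',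
    Nat.cast_add, add_comm]

lemma Cb_mul_Cb_sub (a k m : ℤ) : Cb a k * Cb (a - k) (m - k) = Cb a m * Cb m k := by
  by_cases h : 0 ≤ k ∧ k ≤ m ∧ m ≤ a
  · obtain ⟨K, rfl⟩ := Int.eq_ofNat_of_zero_le h.1
    obtain ⟨M, rfl⟩ := Int.eq_ofNat_of_zero_le (h.1.trans h.2.1)
    obtain ⟨A, rfl⟩ := Int.eq_ofNat_of_zero_le ((h.1.trans h.2.1).trans h.2.2)
    have hKM : K ≤ M := by omega
    have hMA : M ≤ A := by omega
    rw [← Nat.cast_sub (hKM.trans hMA), ← Nat.cast_sub hKM]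
    simp only [Cb_natCast]
    exact_mod_cast (Nat.choose_mul hKM).symm
  · simp only [Cb]
    split_ifs <;> simp_all; omega

lemma sum_range_alternating_choose_mul_Cb (m : ℕ) {N : ℤ} (r : ℤ) (hN : m ≤ N) :
    ∑ k ∈ range (m + 1), (-1 : ℚ) ^ k * m.choose k * Cb (N - k) r = Cb (N - m) (r - m) := by
  induction m generalizing N with
  | zero => simp
  | succ m ih =>
    calc ∑ k ∈ range (m + 1 + 1), (-1 : ℚ) ^ k * (m + 1).choose k * Cb (N - k) r
        = ∑ k ∈ range (m + 1 + 1), (-1 : ℚ) ^ k * m.choose k * Cb (N - k) r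
          - ∑ k ∈ range (m + 1), (-1 : ℚ) ^ k * m.choose k * Cb (N - 1 - k) r := by
          rw [sum_range_succ' _ (m + 1), sum_range_succ' _ (m + 1), add_sub_right_comm,
            ← sum_sub_distrib]
          congr 1
          · refine sum_congr rfl fun k _ => ?_
            rw [Nat.choose_succ_succ', show N - 1 - k = N - (k + 1 : ℕ) by push_cast; ring]
            push_cast
            ring
          · simp
      _ = Cb (N - m) (r - m) - Cb (N - 1 - m) (r - m) := by
          rw [sum_range_succ, ih (by omega), ih (N := N - 1) (by omega), Nat.choose_succ_self]
          simp
      _ = Cb (N - (m + 1 : ℕ)) (r - (m + 1 : ℕ)) := by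
          rw [Cb_pascal (r - m) (by omega)]
          push_cast
          ring_nf

lemma neg_one_pow_tsub {k m : ℕ} (h : k ≤ m) : (-1 : ℚ) ^ (m - k) = (-1) ^ m * (-1) ^ k := by
  rw [← pow_add, show m + k = m - k + 2 * k by omega, pow_add, pow_mul]
  norm_num

lemma sum_Cb_mul_ballot_eq_ite (N m : ℕ) (h : 2 * m ≤ N) :
    ∑ k ∈ range (m + 1), Cb ((N : ℤ) - k) k * ((-1 : ℚ) ^ (m - k) *
        (Cb (N - 2 * k : ℕ) (m - k : ℕ) - Cb (N - 2 * k : ℕ) (((m - k : ℕ) : ℤ) - 1)))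
      = if m = 0 then 1 else 0 := by
  have summand : ∀ k ∈ range (m + 1), Cb ((N : ℤ) - k) k * ((-1 : ℚ) ^ (m - k) *
        (Cb (N - 2 * k : ℕ) (m - k : ℕ) - Cb (N - 2 * k : ℕ) (((m - k : ℕ) : ℤ) - 1)))
      = (-1) ^ m * ((-1) ^ k * m.choose k * Cb (N - k) m
          - (-1) ^ k * Cb (m - 1) k * Cb (N - k) (m - 1)) := by
    intro k hk
    have hkm : k ≤ m := Nat.lt_succ_iff.mp (mem_range.mp hk)
    have h₁ := Cb_mul_Cb_sub (N - k) k m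
    have h₂ := Cb_mul_Cb_sub (N - k) k (m - 1)
    rw [Cb_natCast] at h₁
    rw [Nat.cast_sub hkm, show ((N - 2 * k : ℕ) : ℤ) = N - k - k by omega,
      show (m : ℤ) - k - 1 = m - 1 - k by ring, neg_one_pow_tsub hkm]
    linear_combination (-1 : ℚ) ^ m * (-1) ^ k * (h₁ - h₂)
  rw [sum_congr rfl summand, ← mul_sum, sum_sub_distrib,
    sum_range_alternating_choose_mul_Cb m m (by omega), sub_self, Cb_zero_right (by omega)]
  rcases m with _ | M
  · simp [Cb]
  · rw [show ((M + 1 : ℕ) : ℤ) - 1 = M by omega, sum_range_succ, Cb_of_lt (by omega)]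
    simp only [Cb_natCast, zero_mul, mul_zero, add_zero]
    rw [sum_range_alternating_choose_mul_Cb M M (by omega), sub_self, Cb_zero_right (by omega)]
    simp

theorem X_pow_succ_eq_sum_Cb_mul_QQ (N : ℕ) :
    (X : ℚ[X]) ^ (N + 1) =
      ∑ k ∈ range (N / 2 + 1), C (Cb ((N : ℤ) - k) k) * QQ (N - 2 * k + 1) := by
  set c : ℕ → ℕ → ℚ := fun k j => Cb ((N : ℤ) - k) k * ((-1 : ℚ) ^ j *
    (Cb (N - 2 * k : ℕ) j - Cb (N - 2 * k : ℕ) ((j : ℤ) - 1)))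
  have expand : ∀ k ∈ range (N / 2 + 1), C (Cb ((N : ℤ) - k) k) * QQ (N - 2 * k + 1)
      = ∑ j ∈ range (N / 2 + 1 - k), C (c k j) * X ^ (N + 1 - 2 * (k + j)) := by
    intro k hk
    have hk : k ≤ N / 2 := Nat.lt_succ_iff.mp (mem_range.mp hk)
    rw [QQ, mul_sum, show (N - 2 * k) / 2 + 1 = N / 2 + 1 - k by omega]
    refine sum_congr rfl fun j _ => ?_
    rw [← mul_assoc, ← C_mul, show N - 2 * k + 1 - 2 * j = N + 1 - 2 * (k + j) by omega]
  have collect : ∀ m ∈ range (N / 2 + 1),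
      C (if m = 0 then 1 else 0) * X ^ (N + 1 - 2 * m)
        = ∑ k ∈ range (m + 1), C (c k (m - k)) * X ^ (N + 1 - 2 * (k + (m - k))) := by
    intro m hm
    have hm : m ≤ N / 2 := Nat.lt_succ_iff.mp (mem_range.mp hm)
    rw [← sum_Cb_mul_ballot_eq_ite N m (by omega), map_sum, sum_mul]
    refine sum_congr rfl fun k hk => ?_
    rw [Nat.add_sub_cancel' (Nat.lt_succ_iff.mp (mem_range.mp hk))]
  rw [sum_congr rfl expand,
    ← sum_range_diag_flip _ fun k j => C (c k j) * X ^ (N + 1 - 2 * (k + j)),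
    ← sum_congr rfl collect]
  simp

/-- For every `n ≥ 1`, `x^n = Σ_{k=0}^{⌊(n-1)/2⌋} C(n-1-k, k) · 𝒬_{n-2k}(x)`. -/
theorem stmt6 (n : ℕ) (hn : 1 ≤ n) :
    (Polynomial.X : Polynomial ℚ) ^ n =
      ∑ k ∈ Finset.range ((n - 1) / 2 + 1),
        Polynomial.C (Cb ((n : ℤ) - 1 - k) k) * QQ (n - 2 * k) := by
  obtain ⟨N, rfl⟩ : ∃ N, n = N + 1 := ⟨n - 1, by omega⟩
  rw [X_pow_succ_eq_sum_Cb_mul_QQ, add_tsub_cancel_right]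
  refine sum_congr rfl fun k hk => ?_
  have hk : k ≤ N / 2 := Nat.lt_succ_iff.mp (mem_range.mp hk)
  rw [show N - 2 * k + 1 = N + 1 - 2 * k by omega,
    show (N : ℤ) - k = ((N + 1 : ℕ) : ℤ) - 1 - k by push_cast; ring]
end

section
/- For all integers n ≥ 2, 1 ≤ i ≤ n-1, k ≥ 1: (n+1-2i)/k · C(n-i,k-1)·C(i-1,k-1) = C(n+1-i,k)·C(i-1,k-1) - C(n-i,k-1)·C(i,k), as an identity of rational numbers (both sides being integers). -/
lemma key_choose (a j : ℕ) : (((a+1).choose (j+1)) : ℚ) * (j+1) = (a+1) * (a.choose j) := by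
  have := Nat.add_one_mul_choose_eq a j
  exact_mod_cast congrArg (Nat.cast : ℕ → ℚ) this.symm

/-- For `n ≥ 2`, `1 ≤ i ≤ n-1` and `k ≥ 1`:
`((n+1-2i)/k) C(n-i,k-1) C(i-1,k-1) = C(n+1-i,k)C(i-1,k-1) - C(n-i,k-1)C(i,k)`. -/
theorem stmt15 (n i k : ℤ) (hn : 2 ≤ n) (hi1 : 1 ≤ i) (hi2 : i ≤ n - 1) (hk : 1 ≤ k) :
    ((n : ℚ) + 1 - 2 * i) / (k : ℚ) * Cb (n - i) (k - 1) * Cb (i - 1) (k - 1)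
      = Cb (n + 1 - i) k * Cb (i - 1) (k - 1) - Cb (n - i) (k - 1) * Cb i k := by
  have hk0 : (0:ℤ) ≤ k - 1 := by omega
  by_cases h1 : k - 1 ≤ n - i
  · by_cases h2 : k - 1 ≤ i - 1
    · set A := (n - i).toNat with hA
      set B := (i - 1).toNat with hB
      set K := (k - 1).toNat with hK
      have e1 : Cb (n - i) (k - 1) = ((A.choose K : ℕ) : ℚ) := by
        rw [Cb, if_pos ⟨hk0, h1⟩]
      have e2 : Cb (i - 1) (k - 1) = ((B.choose K : ℕ) : ℚ) := by
        rw [Cb, if_pos ⟨hk0, h2⟩]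
      have hA1 : (n + 1 - i).toNat = A + 1 := by omega
      have hB1 : i.toNat = B + 1 := by omega
      have hK1 : k.toNat = K + 1 := by omega
      have e3 : Cb (n + 1 - i) k = (((A+1).choose (K+1) : ℕ) : ℚ) := by
        rw [Cb, if_pos ⟨by omega, by omega⟩, hA1, hK1]
      have e4 : Cb i k = (((B+1).choose (K+1) : ℕ) : ℚ) := by
        rw [Cb, if_pos ⟨by omega, by omega⟩, hB1, hK1]
      have hkq : (k : ℚ) = (K : ℚ) + 1 := by
        have : (k : ℤ) = (K : ℤ) + 1 := by omega
        exact_mod_cast congrArg (Int.cast : ℤ → ℚ) this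
      have hnum : ((n : ℚ) + 1 - 2 * i) = (A : ℚ) - B := by
        have : (n + 1 - 2*i : ℤ) = (A : ℤ) - B := by omega
        have := congrArg (Int.cast : ℤ → ℚ) this
        push_cast at this ⊢
        linarith
      have hKne : (K : ℚ) + 1 ≠ 0 := by positivity
      rw [e1, e2, e3, e4, hkq, hnum]
      have k1 := key_choose A K
      have k2 := key_choose B K
      field_simp
      nlinarith [k1, k2, sq_nonneg ((A:ℚ) - B)]
    · have e2 : Cb (i - 1) (k - 1) = 0 := by
        rw [Cb, if_neg]; intro ⟨_, h⟩; exact h2 h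
      have e4 : Cb i k = 0 := by
        rw [Cb, if_neg]; intro ⟨_, h⟩; omega
      rw [e2, e4]; ring
  · have e1 : Cb (n - i) (k - 1) = 0 := by
      rw [Cb, if_neg]; intro ⟨_, h⟩; exact h1 h
    have e3 : Cb (n + 1 - i) k = 0 := by
      rw [Cb, if_neg]; intro ⟨_, h⟩; omega
    rw [e1, e3]; ring
end

section
/- For λ ∈ {-1,1}^n let i_λ denote the number of -1 entries of λ and S(λ) = {s ∈ [1,n] : λ_1+⋯+λ_s > 0}. Then the total signed weight Σ_{λ : S(λ) = ∅, λ_1+⋯+λ_n ≥ 0} (-1)^{n-i_λ} x^{n-2i_λ} equals (-1)^{n/2} C_{n/2} if n is even, and 0 if n is odd, where C_m is the m-th Catalan number. -/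
open Polynomial

/-- The step `λ_i ∈ {-1,1}` encoded by a boolean: `true ↦ 1`, `false ↦ -1`. -/
def step {n : ℕ} (f : Fin n → Bool) (i : Fin n) : ℤ := if f i then 1 else -1

/-- The number `i_λ` of `-1` entries of `λ`. -/
def negCount {n : ℕ} (f : Fin n → Bool) : ℕ :=
  (Finset.univ.filter (fun i : Fin n => f i = false)).card

/-!
Encode `λ` as a word in Dyck steps, a `1` being a down step `D` and a `-1` an up step `U`.
Nonpositive partial sums with nonnegative total say exactly that this word is a Dyck word, so
the summation runs over the Dyck words of length `n`: there are `C_{n/2}` of them for even `n`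
and none for odd `n`. Each of them has `i_λ = n/2`, so every summand is the constant
`(-1)^{n/2}`.
-/

open DyckStep

lemma List.forall_take_iff_forall_fin {α : Type*} {p : List α → Prop} {l : List α} {n : ℕ}
    (hl : l.length = n) (h0 : p []) :
    (∀ k, p (l.take k)) ↔ ∀ i : Fin n, p (l.take (i + 1)) := by
  refine ⟨fun h i => h _, fun h k => ?_⟩
  rcases k with _ | k
  · simpa using h0
  by_cases hk : k < n
  · exact h ⟨k, hk⟩
  rcases n with _ | n
  · simpa [List.eq_nil_of_length_eq_zero hl] using h0
  have := h (Fin.last n)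
  rwa [Fin.val_last, List.take_of_length_le (by omega),
    ← List.take_of_length_le (l := l) (i := k + 1) (by omega)] at this

lemma List.count_ofFn {α : Type*} [DecidableEq α] {n : ℕ} (v : Fin n → α) (a : α) :
    (List.ofFn v).count a = (Finset.univ.filter fun i => v i = a).card := by
  rw [← Multiset.coe_count, ← Fin.univ_val_map, Multiset.count_map, Finset.card_def,
    Finset.filter_val]
  simp [eq_comm]

def DyckStep.toInt : DyckStep → ℤ
  | U => -1
  | D => 1

lemma DyckStep.sum_map_toInt (l : List DyckStep) :
    (l.map toInt).sum = l.count D - l.count U := by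
  induction l with
  | nil => simp
  | cons s l ih => cases s <;> simp [toInt, ih] <;> ring

def IsDyckWord (l : List DyckStep) : Prop :=
  l.count U = l.count D ∧ ∀ k, (l.take k).count D ≤ (l.take k).count U

lemma IsDyckWord.two_mul_count_U {l : List DyckStep} (h : IsDyckWord l) :
    2 * l.count U = l.length :=
  (⟨l, h.1, h.2⟩ : DyckWord).two_mul_semilength_eq_length

def vectorIsDyckWordEquiv (n : ℕ) :
    {v : List.Vector DyckStep n // IsDyckWord v.toList} ≃
      {p : DyckWord // p.toList.length = n} where
  toFun v := ⟨⟨v.1.toList, v.2.1, v.2.2⟩, v.1.2⟩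
  invFun p := ⟨⟨p.1.toList, p.2⟩, p.1.count_U_eq_count_D, p.1.count_D_le_count_U⟩
  left_inv _ := rfl
  right_inv _ := rfl

lemma DyckWord.card_length_eq (n : ℕ) :
    Nat.card {p : DyckWord // p.toList.length = n} = if Even n then catalan (n / 2) else 0 := by
  split_ifs with hn
  · rw [← card_dyckWord_semilength_eq_catalan, ← Nat.card_eq_fintype_card]
    exact Nat.card_congr <| Equiv.subtypeEquivRight fun p => by
      rw [← p.two_mul_semilength_eq_length]; obtain ⟨m, rfl⟩ := hn; omega
  · have : IsEmpty {p : DyckWord // p.toList.length = n} :=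
      ⟨fun ⟨p, hp⟩ => hn ⟨p.semilength, by rw [← hp, ← p.two_mul_semilength_eq_length, two_mul]⟩⟩
    exact Nat.card_of_isEmpty

def boolEquivDyckStep : Bool ≃ DyckStep where
  toFun b := if b then D else U
  invFun s := s == D
  left_inv b := by cases b <;> rfl
  right_inv s := by cases s <;> rfl

lemma step_eq_toInt {n : ℕ} (f : Fin n → Bool) (i : Fin n) :
    step f i = (boolEquivDyckStep (f i)).toInt := by
  unfold step; cases f i <;> rfl

def stepsEquiv (n : ℕ) : (Fin n → Bool) ≃ List.Vector DyckStep n :=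
  (Equiv.arrowCongr (Equiv.refl _) boolEquivDyckStep).trans (Equiv.vectorEquivFin _ n).symm

lemma toList_stepsEquiv {n : ℕ} (f : Fin n → Bool) :
    (stepsEquiv n f).toList = List.ofFn fun i => boolEquivDyckStep (f i) :=
  List.Vector.toList_ofFn _

lemma negCount_eq_count_U {n : ℕ} (f : Fin n → Bool) :
    negCount f = (stepsEquiv n f).toList.count U := by
  rw [toList_stepsEquiv, List.count_ofFn, negCount]
  congr 1
  ext i
  cases f i <;> simp [boolEquivDyckStep]

lemma sum_step_filter_lt {n : ℕ} (f : Fin n → Bool) (k : ℕ) :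
    ∑ j with j.val < k, step f j
      = ((stepsEquiv n f).toList.take k).count D - ((stepsEquiv n f).toList.take k).count U := by
  simp only [step_eq_toInt, ← List.sum_take_ofFn, ← DyckStep.sum_map_toInt, toList_stepsEquiv,
    List.map_take, List.map_ofFn]
  rfl

lemma nonpos_partial_sums_iff_isDyckWord {n : ℕ} (f : Fin n → Bool) :
    ((∀ i : Fin n, ∑ j ∈ Finset.Iic i, step f j ≤ 0) ∧ 0 ≤ ∑ j : Fin n, step f j)
      ↔ IsDyckWord (stepsEquiv n f).toList := by
  have hIic (i : Fin n) : Finset.Iic i = Finset.univ.filter (fun j : Fin n => j.val < i + 1) := by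
    ext j; simp only [Finset.mem_Iic, Finset.mem_filter, Finset.mem_univ, true_and]; omega
  have huniv : ∑ j : Fin n, step f j = ∑ j with j.val < n, step f j := by
    rw [Finset.filter_true_of_mem fun j _ => j.isLt]
  have hl := (stepsEquiv n f).toList_length
  simp only [hIic, huniv, sum_step_filter_lt, List.take_of_length_le hl.le]
  generalize (stepsEquiv n f).toList = l at hl ⊢
  constructor
  · rintro ⟨hprefix, hnonneg⟩
    have hall : ∀ k, (l.take k).count D ≤ (l.take k).count U :=
      (List.forall_take_iff_forall_fin (p := fun l' => l'.count D ≤ l'.count U) hl (by simp)).2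
        fun i => by have := hprefix i; omega
    have := hall n
    rw [List.take_of_length_le hl.le] at this
    exact ⟨by omega, hall⟩
  · rintro ⟨hcount, hall⟩
    exact ⟨fun i => by have := hall (i + 1); omega, by omega⟩

lemma card_filter_nonpos_partial_sums (n : ℕ) :
    (Finset.univ.filter fun f : Fin n → Bool =>
      (∀ i : Fin n, ∑ j ∈ Finset.Iic i, step f j ≤ 0) ∧ 0 ≤ ∑ j : Fin n, step f j).card
      = if Even n then catalan (n / 2) else 0 := by
  rw [← Fintype.card_subtype, ← Nat.card_eq_fintype_card, ← DyckWord.card_length_eq]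
  exact Nat.card_congr <|
    (Equiv.subtypeEquiv (stepsEquiv n) nonpos_partial_sums_iff_isDyckWord).trans
      (vectorIsDyckWordEquiv n)

lemma two_mul_negCount_of_nonpos_partial_sums {n : ℕ} {f : Fin n → Bool}
    (hf : (∀ i : Fin n, ∑ j ∈ Finset.Iic i, step f j ≤ 0) ∧ 0 ≤ ∑ j : Fin n, step f j) :
    2 * negCount f = n := by
  rw [negCount_eq_count_U, ((nonpos_partial_sums_iff_isDyckWord f).1 hf).two_mul_count_U,
    List.Vector.toList_length]

lemma weight_of_nonpos_partial_sums {n : ℕ} {f : Fin n → Bool}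
    (hf : (∀ i : Fin n, ∑ j ∈ Finset.Iic i, step f j ≤ 0) ∧ 0 ≤ ∑ j : Fin n, step f j) :
    C ((-1 : ℚ) ^ (n - negCount f)) * X ^ (n - 2 * negCount f) = C ((-1 : ℚ) ^ (n / 2)) := by
  have h := two_mul_negCount_of_nonpos_partial_sums hf
  rw [show n - negCount f = n / 2 by omega, show n - 2 * negCount f = 0 by omega, pow_zero,
    mul_one]

/-- The total signed weight `Σ_{λ : S(λ) = ∅, λ_1+⋯+λ_n ≥ 0} (-1)^{n-i_λ} x^{n-2i_λ}`
over `λ ∈ {-1,1}^n` (where `S(λ) = {s : λ_1+⋯+λ_s > 0}`) equals `(-1)^{n/2} C_{n/2}`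
for even `n` and `0` for odd `n`, where `C_m` is the `m`-th Catalan number. -/
theorem stmt19 (n : ℕ) :
    ∑ f ∈ Finset.univ.filter
        (fun f : Fin n → Bool =>
          (∀ i : Fin n, ∑ j ∈ Finset.Iic i, step f j ≤ 0) ∧
            0 ≤ ∑ j : Fin n, step f j),
      Polynomial.C ((-1 : ℚ) ^ (n - negCount f)) * Polynomial.X ^ (n - 2 * negCount f)
    = if Even n then Polynomial.C ((-1 : ℚ) ^ (n / 2) * (catalan (n / 2) : ℚ)) else 0 := by
  rw [Finset.sum_congr rfl fun f hf => weight_of_nonpos_partial_sums (Finset.mem_filter.1 hf).2,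
    Finset.sum_const, card_filter_nonpos_partial_sums]
  split_ifs
  · rw [nsmul_eq_mul, ← C_eq_natCast, ← C_mul, mul_comm]
  · rw [zero_smul]
end
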